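/- Let φ : y → z^{⊗N} be a q-relation of length N for the Drinfeld quiver Q_z, where q ∈ k is a primitive N-th root of unity, and let (a, f) be a Q_z-module such that a has a right dual a^∗ in A. If (a, f) satisfies the relation φ (φ(f) = 0), then the right dual module (a^∗, f†) also satisfies the relation φ: φ(f†) = 0. -/

import Mathlib

/-!
Up to the sign and the half-braiding `c_z(a^∗)`, the dual action `f†` is the transpose of `f`
under the duality `Hom(X, a^∗) ≅ Hom(X ⊗ a, 1)`, and transposition turns composition of actions
into composition in the opposite order. Hence `(f†)^{∗n}` is `(-1)^n` times the half-braiding of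
`z^{⊗n}` with `a^∗`, followed by the reversal of the factors of `z^{⊗n}`, followed by the transpose
of `f^{∗n}`. The reversal is a product of adjacent swaps `c_{z,z}`, each of which multiplies the
`q`-relation `φ` by `q`. So `φ(f†)` is a multiple of the half-braiding of `y` with `a^∗` followed
by the transpose of `φ(f) = 0`.
-/

open CategoryTheory MonoidalCategory

universe v u

variable {k : Type*} [Field k]
variable {A : Type u} [Category.{v} A] [MonoidalCategory A]
  [Preadditive A] [CategoryTheory.Linear k A] [MonoidalPreadditive A] [MonoidalLinear k A]

/-- The `n`-th tensor power `z^{⊗n}` of an object `z` of the Drinfeld center of `A`. -/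
noncomputable def zcpow (z : CategoryTheory.Center A) : ℕ → CategoryTheory.Center A
  | 0 => 𝟙_ (CategoryTheory.Center A)
  | n + 1 => z ⊗ zcpow z n

/-- The iterated action `f^{∗n} : z^{⊗n} ⊗ a ⟶ a` of a module `(a, f)` over the Drinfeld
quiver `Q_z` (suppressing associators). -/
noncomputable def fstar (z : CategoryTheory.Center A) {a : A} (f : z.1 ⊗ a ⟶ a) :
    (n : ℕ) → ((zcpow z n).1 ⊗ a ⟶ a)
  | 0 => (λ_ a).hom
  | n + 1 => (α_ z.1 (zcpow z n).1 a).hom ≫ (z.1 ◁ fstar z f n) ≫ f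

/-- The morphism `id_{z^{⊗i}} ⊗ c_{z,z} ⊗ id_{z^{⊗(n-i-2)}} : z^{⊗n} ⟶ z^{⊗n}` in the
Drinfeld center, braiding the `(i+1)`-st and `(i+2)`-nd tensor factors. -/
noncomputable def swapAt (z : CategoryTheory.Center A) :
    ℕ → (n : ℕ) → (zcpow z n ⟶ zcpow z n)
  | 0, 0 => 𝟙 _
  | 0, 1 => 𝟙 _
  | 0, (m + 2) =>
      (α_ z z (zcpow z m)).inv ≫ ((β_ z z).hom ▷ zcpow z m) ≫ (α_ z z (zcpow z m)).hom
  | (_ + 1), 0 => 𝟙 _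
  | (i + 1), (n + 1) => z ◁ swapAt z i n

/-- The morphism `φ(f) = f^{∗N} ∘ (φ ⊗ id_a)`; the module `(a, f)` satisfies the relation `φ`
iff `φ(f) = 0`. -/
noncomputable def relMor (z : CategoryTheory.Center A) {y : CategoryTheory.Center A} {N : ℕ}
    (φ : y ⟶ zcpow z N) {a : A} (f : z.1 ⊗ a ⟶ a) : y.1 ⊗ a ⟶ a :=
  (φ.f ▷ a) ≫ fstar z f N

/-- The action `f† : z ⊗ a^∗ ⟶ a^∗` of the right dual module `(a^∗, f†)` of `(a, f)`. -/
noncomputable def fdag (z : CategoryTheory.Center A) {a aS : A} (f : z.1 ⊗ a ⟶ a)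
    (ev : aS ⊗ a ⟶ 𝟙_ A) (coev : 𝟙_ A ⟶ a ⊗ aS) : z.1 ⊗ aS ⟶ aS :=
  - ((z.2.β aS).hom ≫ (ρ_ (aS ⊗ z.1)).inv ≫ ((aS ⊗ z.1) ◁ coev)
      ≫ (α_ aS z.1 (a ⊗ aS)).hom ≫ (aS ◁ (α_ z.1 a aS).inv) ≫ (aS ◁ (f ▷ aS))
      ≫ (α_ aS a aS).inv ≫ (ev ▷ aS) ≫ (λ_ aS).hom)

namespace DrinfeldQuiver

variable {C : Type*} [Category C] [MonoidalCategory C] (z : Center C)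

section Transpose

variable {a aS : C} [ExactPairing a aS]

variable (aS) in
noncomputable def transposeAct {w : C} (h : w ⊗ a ⟶ a) : aS ⊗ w ⟶ aS :=
  tensorRightHomEquiv (aS ⊗ w) a aS (𝟙_ C) ((α_ aS w a).hom ≫ (aS ◁ h) ≫ ε_ a aS) ≫ (λ_ aS).hom

lemma tensorRightHomEquiv_symm_comp_leftUnitor_inv {X : C} (u : X ⟶ aS) :
    (tensorRightHomEquiv X a aS (𝟙_ C)).symm (u ≫ (λ_ aS).inv) = (u ▷ a) ≫ ε_ a aS := by
  simp only [tensorRightHomEquiv, Equiv.coe_fn_symm_mk]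
  monoidal

variable (a) in
lemma eq_of_whiskerRight_comp_evaluation_eq {X : C} {u u' : X ⟶ aS}
    (h : (u ▷ a) ≫ ε_ a aS = (u' ▷ a) ≫ ε_ a aS) : u = u' := by
  rw [← tensorRightHomEquiv_symm_comp_leftUnitor_inv,
    ← tensorRightHomEquiv_symm_comp_leftUnitor_inv] at h
  simpa using (tensorRightHomEquiv X a aS (𝟙_ C)).symm.injective h

lemma whiskerRight_transposeAct_comp_evaluation {w : C} (h : w ⊗ a ⟶ a) :
    (transposeAct aS h ▷ a) ≫ ε_ a aS = (α_ aS w a).hom ≫ (aS ◁ h) ≫ ε_ a aS := by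
  rw [← tensorRightHomEquiv_symm_comp_leftUnitor_inv, transposeAct, Category.assoc,
    Iso.hom_inv_id, Category.comp_id, Equiv.symm_apply_apply]

lemma transposeAct_zero [Preadditive C] [MonoidalPreadditive C] (w : C) :
    transposeAct aS (0 : w ⊗ a ⟶ a) = 0 :=
  eq_of_whiskerRight_comp_evaluation_eq a (by simp [whiskerRight_transposeAct_comp_evaluation])

lemma whiskerLeft_comp_transposeAct {w w' : C} (u : w' ⟶ w) (h : w ⊗ a ⟶ a) :
    (aS ◁ u) ≫ transposeAct aS h = transposeAct aS ((u ▷ a) ≫ h) := by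
  refine eq_of_whiskerRight_comp_evaluation_eq a ?_
  simp only [comp_whiskerRight, Category.assoc, whiskerRight_transposeAct_comp_evaluation,
    MonoidalCategory.whiskerLeft_comp, associator_naturality_middle_assoc]

lemma transposeAct_tensor {w v : C} (g : w ⊗ a ⟶ a) (h : v ⊗ a ⟶ a) :
    (α_ aS w v).inv ≫ (transposeAct aS g ▷ v) ≫ transposeAct aS h
      = transposeAct aS ((α_ w v a).hom ≫ (w ◁ h) ≫ g) := by
  refine eq_of_whiskerRight_comp_evaluation_eq a ?_
  calc _ = 𝟙 _ ⊗≫ (transposeAct aS g ▷ (v ⊗ a) ≫ aS ◁ h) ≫ ε_ a aS := by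
        simp only [comp_whiskerRight, Category.assoc, whiskerRight_transposeAct_comp_evaluation]
        monoidal
    _ = 𝟙 _ ⊗≫ (aS ⊗ w) ◁ h ≫ (transposeAct aS g ▷ a) ≫ ε_ a aS := by
        rw [← whisker_exchange, Category.assoc]
    _ = _ := by
        rw [whiskerRight_transposeAct_comp_evaluation, whiskerRight_transposeAct_comp_evaluation]
        monoidal

lemma transposeAct_leftUnitor : transposeAct aS (λ_ a).hom = (ρ_ aS).hom := by
  refine eq_of_whiskerRight_comp_evaluation_eq a ?_
  rw [whiskerRight_transposeAct_comp_evaluation]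
  monoidal

end Transpose

noncomputable def swapSubmonoid (n : ℕ) : Submonoid (End (zcpow z n).1) :=
  Submonoid.closure {g | ∃ i, i + 2 ≤ n ∧ g = (swapAt z i n).f}

lemma whiskerLeft_mem_swapSubmonoid {n : ℕ} {g : End (zcpow z n).1}
    (hg : g ∈ swapSubmonoid z n) :
    (z.1 ◁ g : End (zcpow z (n + 1)).1) ∈ swapSubmonoid z (n + 1) := by
  refine (Submonoid.closure_le
    (S := (swapSubmonoid z (n + 1)).comap (Functor.mapEnd (zcpow z n).1 (tensorLeft z.1)))).2 ?_ hg
  rintro _ ⟨i, hi, rfl⟩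
  exact Submonoid.subset_closure ⟨i + 1, by omega, rfl⟩

noncomputable def zcpowSnoc : (n : ℕ) → ((zcpow z n).1 ⊗ z.1 ⟶ (zcpow z (n + 1)).1)
  | 0 => (λ_ z.1).hom ≫ (ρ_ z.1).inv
  | n + 1 => (α_ z.1 (zcpow z n).1 z.1).hom ≫ (z.1 ◁ zcpowSnoc n)

noncomputable def zcpowRotate (n : ℕ) : End (zcpow z (n + 1)).1 :=
  (z.2.β (zcpow z n).1).hom ≫ zcpowSnoc z n

noncomputable def zcpowReverse : (n : ℕ) → End (zcpow z n).1
  | 0 => 𝟙 _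
  | n + 1 => (z.2.β (zcpow z n).1).hom ≫ (zcpowReverse n ▷ z.1) ≫ zcpowSnoc z n

lemma zcpowRotate_zero : zcpowRotate z 0 = 𝟙 _ := by
  have hunit : (z.2.β (𝟙_ C)).hom = (ρ_ z.1).hom ≫ (λ_ z.1).inv := by
    have := congrArg Center.Hom.f (braiding_tensorUnit_right z)
    simp only [Center.comp_f, Center.rightUnitor_hom_f, Center.leftUnitor_inv_f] at this
    exact this
  -- `zcpow z (n + 1)` is `z ⊗ zcpow z n` only up to unfolding, so here and below goals are
  -- restated with explicit tensor factors before rewriting.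
  show (z.2.β (𝟙_ C)).hom ≫ (λ_ z.1).hom ≫ (ρ_ z.1).inv = 𝟙 _
  simp [hunit]

lemma swapAt_zero_f (n : ℕ) : (swapAt z 0 (n + 2)).f = (α_ z.1 z.1 (zcpow z n).1).inv
    ≫ ((z.2.β z.1).hom ▷ (zcpow z n).1) ≫ (α_ z.1 z.1 (zcpow z n).1).hom := by
  show ((α_ z z (zcpow z n)).inv ≫ ((β_ z z).hom ▷ zcpow z n) ≫ (α_ z z (zcpow z n)).hom).f = _
  simp only [Center.comp_f, Center.associator_inv_f, Center.whiskerRight_f,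
    Center.associator_hom_f]
  rfl

lemma zcpowRotate_succ (n : ℕ) :
    zcpowRotate z (n + 1) = (swapAt z 0 (n + 2)).f ≫ (z.1 ◁ zcpowRotate z n) := by
  rw [swapAt_zero_f]
  show (z.2.β (z.1 ⊗ (zcpow z n).1)).hom ≫ (α_ z.1 (zcpow z n).1 z.1).hom ≫ (z.1 ◁ zcpowSnoc z n)
    = ((α_ z.1 z.1 (zcpow z n).1).inv ≫ ((z.2.β z.1).hom ▷ (zcpow z n).1)
      ≫ (α_ z.1 z.1 (zcpow z n).1).hom) ≫ z.1 ◁ ((z.2.β (zcpow z n).1).hom ≫ zcpowSnoc z n)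
  simp

lemma zcpowReverse_succ (n : ℕ) :
    zcpowReverse z (n + 1) = (z.1 ◁ zcpowReverse z n) ≫ zcpowRotate z n :=
  (HalfBraiding.naturality_assoc _ _ _).symm

lemma zcpowRotate_mem_swapSubmonoid (n : ℕ) : zcpowRotate z n ∈ swapSubmonoid z (n + 1) := by
  induction n with
  | zero => rw [zcpowRotate_zero]; exact one_mem _
  | succ n ih =>
    rw [zcpowRotate_succ]
    exact mul_mem (whiskerLeft_mem_swapSubmonoid z ih)
      (Submonoid.subset_closure ⟨0, by omega, rfl⟩)

lemma zcpowReverse_mem_swapSubmonoid (n : ℕ) : zcpowReverse z n ∈ swapSubmonoid z n := by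
  induction n with
  | zero => exact one_mem _
  | succ n ih =>
    rw [zcpowReverse_succ]
    exact mul_mem (zcpowRotate_mem_swapSubmonoid z n) (whiskerLeft_mem_swapSubmonoid z ih)

lemma exists_comp_eq_pow_smul_of_mem_swapSubmonoid {R : Type*} [Semiring R] [Preadditive C]
    [Linear R C] {q : R} {y : Center C} {N : ℕ} {φ : y ⟶ zcpow z N}
    (hφ : ∀ i : ℕ, i + 2 ≤ N → (φ ≫ swapAt z i N).f = q • φ.f)
    {g : End (zcpow z N).1} (hg : g ∈ swapSubmonoid z N) :
    ∃ m : ℕ, φ.f ≫ g = q ^ m • φ.f := by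
  induction hg using Submonoid.closure_induction with
  | mem g hg =>
    obtain ⟨i, hi, rfl⟩ := hg
    exact ⟨1, by rw [pow_one, ← hφ i hi, Center.comp_f]⟩
  | one => exact ⟨0, by simp [End.one_def]⟩
  | mul g h _ _ ihg ihh =>
    obtain ⟨m, hm⟩ := ihh
    obtain ⟨n, hn⟩ := ihg
    refine ⟨m + n, ?_⟩
    rw [End.mul_def, ← Category.assoc, hm, Linear.smul_comp, hn, smul_smul, pow_add]

lemma fstar_succ {a : C} (f : z.1 ⊗ a ⟶ a) (n : ℕ) :
    fstar z f (n + 1) = (α_ z.1 (zcpow z n).1 a).hom ≫ (z.1 ◁ fstar z f n) ≫ f := rfl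

lemma whiskerRight_zcpowSnoc_comp_fstar {a : C} (f : z.1 ⊗ a ⟶ a) (n : ℕ) :
    (zcpowSnoc z n ▷ a) ≫ fstar z f (n + 1)
      = (α_ (zcpow z n).1 z.1 a).hom ≫ ((zcpow z n).1 ◁ f) ≫ fstar z f n := by
  induction n with
  | zero =>
    show (((λ_ z.1).hom ≫ (ρ_ z.1).inv) ▷ a) ≫ (α_ z.1 (𝟙_ C) a).hom ≫ (z.1 ◁ (λ_ a).hom) ≫ f
      = (α_ (𝟙_ C) z.1 a).hom ≫ ((𝟙_ C) ◁ f) ≫ (λ_ a).hom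
    monoidal
  | succ n ih =>
    show ((α_ z.1 (zcpow z n).1 z.1).hom ≫ (z.1 ◁ zcpowSnoc z n)) ▷ a
        ≫ (α_ z.1 (zcpow z (n + 1)).1 a).hom ≫ (z.1 ◁ fstar z f (n + 1)) ≫ f
      = (α_ (z.1 ⊗ (zcpow z n).1) z.1 a).hom ≫ ((z.1 ⊗ (zcpow z n).1) ◁ f)
        ≫ (α_ z.1 (zcpow z n).1 a).hom ≫ (z.1 ◁ fstar z f n) ≫ f
    calc _ = 𝟙 _ ⊗≫ z.1 ◁ ((zcpowSnoc z n ▷ a) ≫ fstar z f (n + 1)) ≫ f := by monoidal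
      _ = _ := by rw [ih]; monoidal

lemma halfBraiding_yang_baxter (X Y : Center C) (U : C) :
    ((X.2.β Y.1).hom ▷ U) ≫ (α_ Y.1 X.1 U).hom ≫ (Y.1 ◁ (X.2.β U).hom) ≫ (α_ Y.1 U X.1).inv
      ≫ ((Y.2.β U).hom ▷ X.1) ≫ (α_ U Y.1 X.1).hom
    = (α_ X.1 Y.1 U).hom ≫ (X.1 ◁ (Y.2.β U).hom) ≫ (α_ X.1 U Y.1).inv
      ≫ ((X.2.β U).hom ▷ Y.1) ≫ (α_ U X.1 Y.1).hom ≫ (U ◁ (X.2.β Y.1).hom) := by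
  have h := (β_ X Y).hom.comm U
  simp only [Center.tensor_fst, Center.tensor_β, Iso.trans_hom, whiskerLeftIso_hom, Iso.symm_hom,
    whiskerRightIso_hom, Category.assoc] at h
  exact h

lemma fstar_halfBraiding_comp_transposeAct {a aS : C} [ExactPairing a aS] (f : z.1 ⊗ a ⟶ a)
    (n : ℕ) : fstar z ((z.2.β aS).hom ≫ transposeAct aS f) n
      = ((zcpow z n).2.β aS).hom ≫ (aS ◁ zcpowReverse z n) ≫ transposeAct aS (fstar z f n) := by
  induction n with
  | zero =>
    show (λ_ aS).hom = ((λ_ aS).hom ≫ (ρ_ aS).inv) ≫ (aS ◁ 𝟙 (𝟙_ C)) ≫ transposeAct aS (λ_ a).hom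
    rw [transposeAct_leftUnitor, MonoidalCategory.whiskerLeft_id]
    simp
  | succ n ih =>
    show (α_ z.1 (zcpow z n).1 aS).hom ≫ z.1 ◁ fstar z ((z.2.β aS).hom ≫ transposeAct aS f) n
        ≫ (z.2.β aS).hom ≫ transposeAct aS f
      = ((α_ z.1 (zcpow z n).1 aS).hom ≫ (z.1 ◁ ((zcpow z n).2.β aS).hom)
          ≫ (α_ z.1 aS (zcpow z n).1).inv ≫ ((z.2.β aS).hom ▷ (zcpow z n).1)
          ≫ (α_ aS z.1 (zcpow z n).1).hom)
        ≫ aS ◁ ((z.2.β (zcpow z n).1).hom ≫ (zcpowReverse z n ▷ z.1) ≫ zcpowSnoc z n)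
        ≫ transposeAct aS (fstar z f (n + 1))
    calc _ = (α_ z.1 (zcpow z n).1 aS).hom ≫ (z.2.β ((zcpow z n).1 ⊗ aS)).hom
            ≫ (((zcpow z n).2.β aS).hom ▷ z.1) ≫ (α_ aS (zcpow z n).1 z.1).hom
            ≫ (aS ◁ (zcpowReverse z n ▷ z.1))
            ≫ (α_ aS (zcpow z n).1 z.1).inv ≫ (transposeAct aS (fstar z f n) ▷ z.1)
            ≫ transposeAct aS f := by
          rw [ih]
          simp only [MonoidalCategory.whiskerLeft_comp, Category.assoc,
            HalfBraiding.naturality_assoc, whisker_assoc]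
      _ = ((α_ z.1 (zcpow z n).1 aS).hom ≫ (z.1 ◁ ((zcpow z n).2.β aS).hom)
          ≫ (α_ z.1 aS (zcpow z n).1).inv ≫ ((z.2.β aS).hom ▷ (zcpow z n).1)
          ≫ (α_ aS z.1 (zcpow z n).1).hom) ≫ (aS ◁ (z.2.β (zcpow z n).1).hom)
          ≫ (aS ◁ (zcpowReverse z n ▷ z.1))
          ≫ transposeAct aS ((α_ (zcpow z n).1 z.1 a).hom ≫ ((zcpow z n).1 ◁ f) ≫ fstar z f n) := by
          rw [← transposeAct_tensor, HalfBraiding.monoidal]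
          simp only [Category.assoc, Iso.hom_inv_id_assoc]
          rw [reassoc_of% halfBraiding_yang_baxter]
      _ = _ := by
          rw [← whiskerRight_zcpowSnoc_comp_fstar, ← whiskerLeft_comp_transposeAct]
          simp

lemma fstar_neg [Preadditive C] [MonoidalPreadditive C] {b : C} (h : z.1 ⊗ b ⟶ b) (n : ℕ) :
    fstar z (-h) n = (-1 : ℤ) ^ n • fstar z h n := by
  induction n with
  | zero => rw [pow_zero, one_zsmul]; rfl
  | succ n ih =>
    have hwhisker : z.1 ◁ ((-1 : ℤ) ^ n • fstar z h n) = (-1 : ℤ) ^ n • (z.1 ◁ fstar z h n) :=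
      (tensorLeft z.1).map_zsmul
    show (α_ z.1 (zcpow z n).1 b).hom ≫ (z.1 ◁ fstar z (-h) n) ≫ (-h)
      = (-1 : ℤ) ^ (n + 1) • ((α_ z.1 (zcpow z n).1 b).hom ≫ (z.1 ◁ fstar z h n) ≫ h)
    rw [ih, hwhisker]
    simp [pow_succ]

lemma fdag_eq_neg_halfBraiding_comp_transposeAct [Preadditive C] {a aS : C} [ExactPairing a aS]
    (f : z.1 ⊗ a ⟶ a) :
    fdag z f (ε_ a aS) (η_ a aS) = -((z.2.β aS).hom ≫ transposeAct aS f) := by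
  rw [fdag, transposeAct]
  simp [tensorRightHomEquiv]

end DrinfeldQuiver

open DrinfeldQuiver in
theorem fdag_satisfies_q_relation_general (z : CategoryTheory.Center A) {N : ℕ} {q : k}
    {y : CategoryTheory.Center A} (φ : y ⟶ zcpow z N)
    (hφ : ∀ i : ℕ, i + 2 ≤ N → (φ ≫ swapAt z i N).f = q • φ.f)
    {a aS : A} (f : z.1 ⊗ a ⟶ a)
    (ev : aS ⊗ a ⟶ 𝟙_ A) (coev : 𝟙_ A ⟶ a ⊗ aS)
    (zig : (coev ▷ a) ≫ (α_ a aS a).hom ≫ (a ◁ ev) = (λ_ a).hom ≫ (ρ_ a).inv)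
    (zag : (aS ◁ coev) ≫ (α_ aS a aS).inv ≫ (ev ▷ aS) = (ρ_ aS).hom ≫ (λ_ aS).inv)
    (hf : relMor z φ f = 0) :
    relMor z φ (fdag z f ev coev) = 0 := by
  let _ : ExactPairing a aS := ⟨coev, ev, zag, zig⟩
  obtain ⟨m, hm⟩ := exists_comp_eq_pow_smul_of_mem_swapSubmonoid z hφ
    (zcpowReverse_mem_swapSubmonoid z N)
  calc relMor z φ (fdag z f ev coev)
      = (-1 : ℤ) ^ N • (φ.f ▷ aS) ≫ fstar z ((z.2.β aS).hom ≫ transposeAct aS f) N := by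
        rw [relMor, ← Preadditive.comp_zsmul, ← fstar_neg,
          ← fdag_eq_neg_halfBraiding_comp_transposeAct]
        rfl
    _ = (-1 : ℤ) ^ N • (y.2.β aS).hom ≫ aS ◁ (φ.f ≫ zcpowReverse z N)
          ≫ transposeAct aS (fstar z f N) := by
        rw [fstar_halfBraiding_comp_transposeAct, Center.Hom.comm_assoc,
          MonoidalCategory.whiskerLeft_comp_assoc]
    _ = (-1 : ℤ) ^ N • q ^ m • (y.2.β aS).hom ≫ transposeAct aS (relMor z φ f) := by
        rw [hm, MonoidalLinear.whiskerLeft_smul, Linear.smul_comp, whiskerLeft_comp_transposeAct,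
          Linear.comp_smul, relMor]
    _ = 0 := by rw [hf, transposeAct_zero]; simp

/-- If `(a, f)` satisfies a `q`-relation `φ` of length `N` (with `q` a primitive `N`-th root of
unity), then so does the right dual module `(a^∗, f†)`. -/
theorem fdag_satisfies_q_relation (z : CategoryTheory.Center A) {N : ℕ} {q : k}
    (hq : IsPrimitiveRoot q N)
    {y : CategoryTheory.Center A} (φ : y ⟶ zcpow z N)
    (hφ : ∀ i : ℕ, i + 2 ≤ N → (φ ≫ swapAt z i N).f = q • φ.f)
    {a aS : A} (f : z.1 ⊗ a ⟶ a)
    (ev : aS ⊗ a ⟶ 𝟙_ A) (coev : 𝟙_ A ⟶ a ⊗ aS)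
    (zig : (coev ▷ a) ≫ (α_ a aS a).hom ≫ (a ◁ ev) = (λ_ a).hom ≫ (ρ_ a).inv)
    (zag : (aS ◁ coev) ≫ (α_ aS a aS).inv ≫ (ev ▷ aS) = (ρ_ aS).hom ≫ (λ_ aS).inv)
    (hf : relMor z φ f = 0) :
    relMor z φ (fdag z f ev coev) = 0 :=
  fdag_satisfies_q_relation_general z φ hφ f ev coev zig zag hf
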